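/- Let f be a function from datasets (multisets of records from X) to ℝ^k (functions Fin k → ℝ), let D be a fixed dataset, let ε > 0, and let b > 0 satisfy ‖f(y) − f(D)‖₁ ≤ ε·b for every dataset y that is a neighbor of D (so that b is at least LS_f(D)/ε, where LS_f(D) is the local sensitivity of f at D). Let μ_b be the Laplace(0, b) measure on ℝ, i.e., the measure with density x ↦ (1/(2b))·exp(−|x|/b) with respect to Lebesgue measure, and let ν be the product measure on Fin k → ℝ whose coordinates are i.i.d. μ_b. Define the mechanism κ(D') = ν.map (z ↦ f(D') + z). Then κ satisfies ε-individual differential privacy at D: for every neighbor dataset D' of D and every measurable S ⊆ ℝ^k, exp(−ε)·κ(D')(S) ≤ κ(D)(S) ≤ exp(ε)·κ(D')(S). -/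

import Mathlib

/-!
The Laplace density `p(x) ∝ exp (-|x| / b)` satisfies `p (x - τ) ≤ exp (|τ| / b) * p x` by the
triangle inequality, so the product density of the noise satisfies the same bound with `|τ|`
replaced by the `ℓ¹`-norm of the shift. As Lebesgue measure is translation invariant, translating
the noise by `t = f D - f D'` therefore multiplies the mass of every set by at most
`exp (‖t‖₁ / b) ≤ exp ε`; the same bound with `D` and `D'` swapped gives the lower inequality.
-/

open MeasureTheory Real

/-- Two datasets (multisets of records) are neighbors if one is obtained from the
other by replacing one record. -/
def Neighbor {X : Type*} [DecidableEq X] (D₁ D₂ : Multiset X) : Prop :=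
  ∃ a ∈ D₁, ∃ b : X, D₂ = D₁.erase a + {b}

/-- The Laplace(0, b) measure on ℝ: density `x ↦ (1/(2b)) · exp(−|x|/b)` with
respect to Lebesgue measure. -/
noncomputable def laplaceMeasure (b : ℝ) : Measure ℝ :=
  MeasureTheory.volume.withDensity
    (fun x => ENNReal.ofReal ((1 / (2 * b)) * Real.exp (-|x| / b)))

open scoped ENNReal

namespace MeasureTheory

theorem lintegral_fin_nat_prod_eq_prod {E : Type*} [MeasurableSpace E] {n : ℕ}
    {μ : Fin n → Measure E} [∀ i, SigmaFinite (μ i)]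
    {f : Fin n → E → ℝ≥0∞} (hf : ∀ i, Measurable (f i)) :
    ∫⁻ x : Fin n → E, ∏ i, f i (x i) ∂(Measure.pi μ) = ∏ i, ∫⁻ x, f i x ∂(μ i) := by
  induction n with
  | zero => simp
  | succ n ih =>
    calc
      _ = ∫⁻ x : E × (Fin n → E), f 0 x.1 * ∏ i : Fin n, f i.succ (x.2 i)
          ∂((μ 0).prod (Measure.pi fun i ↦ μ i.succ)) := by
        rw [← ((measurePreserving_piFinSuccAbove μ 0).symm).lintegral_comp_emb
          (MeasurableEquiv.measurableEmbedding _)]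
        simp_rw [MeasurableEquiv.piFinSuccAbove_symm_apply, Fin.insertNthEquiv,
          Fin.prod_univ_succ, Fin.insertNth_zero, Equiv.coe_fn_mk, Fin.cons_succ,
          Fin.zero_succAbove, cast_eq, Fin.cons_zero]
      _ = (∫⁻ x, f 0 x ∂μ 0) * ∏ i : Fin n, ∫⁻ x, f i.succ x ∂(μ i.succ) := by
        rw [← ih fun i ↦ hf i.succ]
        exact lintegral_prod_mul (hf 0).aemeasurable <| (Finset.measurable_prod _
          fun (i : Fin n) _ ↦ (hf i.succ).comp (measurable_pi_apply i)).aemeasurable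
      _ = ∏ i, ∫⁻ x, f i x ∂(μ i) := by rw [Fin.prod_univ_succ]

theorem Measure.pi_withDensity {E : Type*} [MeasurableSpace E] {n : ℕ}
    {μ : Fin n → Measure E} [∀ i, SigmaFinite (μ i)]
    {g : Fin n → E → ℝ≥0∞} (hg : ∀ i, Measurable (g i))
    [∀ i, SigmaFinite ((μ i).withDensity (g i))] :
    Measure.pi (fun i ↦ (μ i).withDensity (g i)) =
      (Measure.pi μ).withDensity fun x ↦ ∏ i, g i (x i) := by
  refine Measure.pi_eq fun s hs ↦ ?_
  simp_rw [withDensity_apply _ (MeasurableSet.univ_pi hs), Measure.restrict_pi_pi,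
    withDensity_apply _ (hs _)]
  exact lintegral_fin_nat_prod_eq_prod hg

theorem map_add_right_withDensity_le {G : Type*} [MeasurableSpace G] [AddGroup G]
    [MeasurableAdd G] (μ : Measure G) [μ.IsAddRightInvariant] {g : G → ℝ≥0∞}
    (hg : Measurable g) (t : G) {C : ℝ≥0∞} (hshift : ∀ x, g (x - t) ≤ C * g x) :
    (μ.withDensity g).map (· + t) ≤ C • μ.withDensity g := by
  refine Measure.le_iff.2 fun A hA ↦ ?_
  have hA' : MeasurableSet ((· + t) ⁻¹' A) := measurable_add_const t hA
  rw [Measure.map_apply (measurable_add_const t) hA, Measure.smul_apply, smul_eq_mul,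
    withDensity_apply _ hA', withDensity_apply _ hA]
  calc ∫⁻ x in (· + t) ⁻¹' A, g x ∂μ
      = ∫⁻ x in (· + t) ⁻¹' A, g (x + t - t) ∂μ := by simp_rw [add_sub_cancel_right]
    _ = ∫⁻ y in A, g (y - t) ∂μ :=
        (measurePreserving_add_right μ t).setLIntegral_comp_preimage_emb
          (measurableEmbedding_addRight t) (fun y ↦ g (y - t)) A
    _ ≤ ∫⁻ y in A, C * g y ∂μ := lintegral_mono fun y ↦ hshift y
    _ = C * ∫⁻ y in A, g y ∂μ := lintegral_const_mul _ hg

end MeasureTheory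

noncomputable def laplaceDensity (b x : ℝ) : ℝ≥0∞ :=
  ENNReal.ofReal ((1 / (2 * b)) * Real.exp (-|x| / b))

theorem laplaceMeasure_eq_withDensity (b : ℝ) :
    laplaceMeasure b = volume.withDensity (laplaceDensity b) := rfl

@[fun_prop]
theorem measurable_laplaceDensity (b : ℝ) : Measurable (laplaceDensity b) := by
  unfold laplaceDensity; fun_prop

instance (b : ℝ) : SigmaFinite (volume.withDensity (laplaceDensity b)) :=
  SigmaFinite.withDensity_ofReal _

theorem laplaceDensity_sub_le {b : ℝ} (hb : 0 < b) (x τ : ℝ) :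
    laplaceDensity b (x - τ) ≤ ENNReal.ofReal (Real.exp (|τ| / b)) * laplaceDensity b x := by
  rw [laplaceDensity, laplaceDensity, ← ENNReal.ofReal_mul (Real.exp_pos _).le]
  refine ENNReal.ofReal_le_ofReal ?_
  rw [mul_left_comm, ← Real.exp_add, ← add_div]
  gcongr
  linarith [abs_sub_abs_le_abs_sub x τ]

theorem pi_laplaceMeasure_eq_withDensity (b : ℝ) (k : ℕ) :
    Measure.pi (fun _ : Fin k ↦ laplaceMeasure b) =
      volume.withDensity fun x ↦ ∏ i, laplaceDensity b (x i) := by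
  simp_rw [laplaceMeasure_eq_withDensity]
  rw [Measure.pi_withDensity fun _ ↦ measurable_laplaceDensity b, volume_pi]

theorem map_add_right_pi_laplaceMeasure_le {b : ℝ} (hb : 0 < b) {k : ℕ} (t : Fin k → ℝ) :
    (Measure.pi fun _ : Fin k ↦ laplaceMeasure b).map (· + t) ≤
      ENNReal.ofReal (Real.exp ((∑ i, |t i|) / b)) •
        Measure.pi fun _ : Fin k ↦ laplaceMeasure b := by
  rw [pi_laplaceMeasure_eq_withDensity]
  refine map_add_right_withDensity_le _ (by fun_prop) t fun x ↦ ?_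
  calc ∏ i, laplaceDensity b (x i - t i)
      ≤ ∏ i, ENNReal.ofReal (Real.exp (|t i| / b)) * laplaceDensity b (x i) :=
        Finset.prod_le_prod' fun i _ ↦ laplaceDensity_sub_le hb (x i) (t i)
    _ = ENNReal.ofReal (Real.exp ((∑ i, |t i|) / b)) * ∏ i, laplaceDensity b (x i) := by
        rw [Finset.prod_mul_distrib,
          ← ENNReal.ofReal_prod_of_nonneg fun i _ ↦ (Real.exp_pos _).le, ← Real.exp_sum,
          Finset.sum_div]

theorem map_const_add_pi_laplaceMeasure_le {b ε : ℝ} (hb : 0 < b) {k : ℕ} {c d : Fin k → ℝ}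
    (hcd : ∑ i, |c i - d i| ≤ ε * b) :
    (Measure.pi fun _ : Fin k ↦ laplaceMeasure b).map (c + ·) ≤
      ENNReal.ofReal (Real.exp ε) • (Measure.pi fun _ : Fin k ↦ laplaceMeasure b).map (d + ·) := by
  set ν := Measure.pi fun _ : Fin k ↦ laplaceMeasure b
  have hexp :
      ENNReal.ofReal (Real.exp ((∑ i, |(c - d) i|) / b)) ≤ ENNReal.ofReal (Real.exp ε) := by
    gcongr
    simpa [div_le_iff₀ hb] using hcd
  calc ν.map (c + ·) = (ν.map (· + (c - d))).map (d + ·) := by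
        rw [Measure.map_map (measurable_const_add d) (measurable_add_const _)]
        congr 1; funext z; simp only [Function.comp_apply]; abel
    _ ≤ (ENNReal.ofReal (Real.exp ((∑ i, |(c - d) i|) / b)) • ν).map (d + ·) :=
        Measure.map_mono (map_add_right_pi_laplaceMeasure_le hb (c - d)) (measurable_const_add d)
    _ ≤ ENNReal.ofReal (Real.exp ε) • ν.map (d + ·) := by
        rw [Measure.map_smul]; gcongr

theorem laplace_mechanism_iDP_general {X : Type*} [DecidableEq X] {k : ℕ}
    (f : Multiset X → (Fin k → ℝ)) (D : Multiset X)
    (ε b : ℝ) (hb : 0 < b)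
    (hsens : ∀ y : Multiset X, Neighbor D y → (∑ i, |f y i - f D i|) ≤ ε * b)
    (κ : Multiset X → Measure (Fin k → ℝ))
    (hκ : ∀ D' : Multiset X,
      κ D' = (Measure.pi fun _ : Fin k => laplaceMeasure b).map (fun z => f D' + z)) :
    ∀ D' : Multiset X, Neighbor D D' → ∀ S : Set (Fin k → ℝ), MeasurableSet S →
      ENNReal.ofReal (Real.exp (-ε)) * κ D' S ≤ κ D S ∧
        κ D S ≤ ENNReal.ofReal (Real.exp ε) * κ D' S := by
  intro D' hD' S _
  have hsens' : ∑ i, |f D i - f D' i| ≤ ε * b := by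
    simpa only [abs_sub_comm] using hsens D' hD'
  have hcompare : ∀ E E' : Multiset X, ∑ i, |f E i - f E' i| ≤ ε * b →
      κ E S ≤ ENNReal.ofReal (Real.exp ε) * κ E' S := fun E E' hEE' ↦ by
    simp_rw [hκ]; exact Measure.le_iff'.1 (map_const_add_pi_laplaceMeasure_le hb hEE') S
  have hle := hcompare D D' hsens'
  have hle' := hcompare D' D (hsens D' hD')
  refine ⟨?_, hle⟩
  calc ENNReal.ofReal (Real.exp (-ε)) * κ D' S
      ≤ ENNReal.ofReal (Real.exp (-ε)) * (ENNReal.ofReal (Real.exp ε) * κ D S) := by gcongr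
    _ = κ D S := by
      rw [← mul_assoc, ← ENNReal.ofReal_mul (Real.exp_pos _).le, ← Real.exp_add,
        neg_add_cancel, Real.exp_zero, ENNReal.ofReal_one, one_mul]

/-- The Laplace mechanism with i.i.d. `Laplace(0, b)` noise on each of the `k`
coordinates, calibrated to the local sensitivity of `f` at `D` (i.e. `b` such
that `‖f(y) − f(D)‖₁ ≤ ε·b` for every neighbor `y` of `D`), satisfies
`ε`-individual differential privacy at `D`. -/
theorem laplace_mechanism_iDP {X : Type*} [DecidableEq X] {k : ℕ}
    (f : Multiset X → (Fin k → ℝ)) (D : Multiset X)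
    (ε b : ℝ) (hε : 0 < ε) (hb : 0 < b)
    (hsens : ∀ y : Multiset X, Neighbor D y → (∑ i, |f y i - f D i|) ≤ ε * b)
    (κ : Multiset X → Measure (Fin k → ℝ))
    (hκ : ∀ D' : Multiset X,
      κ D' = (Measure.pi fun _ : Fin k => laplaceMeasure b).map (fun z => f D' + z)) :
    ∀ D' : Multiset X, Neighbor D D' → ∀ S : Set (Fin k → ℝ), MeasurableSet S →
      ENNReal.ofReal (Real.exp (-ε)) * κ D' S ≤ κ D S ∧
        κ D S ≤ ENNReal.ofReal (Real.exp ε) * κ D' S :=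
  laplace_mechanism_iDP_general f D ε b hb hsens κ hκ
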